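/- arXiv:2208.14069 — 8 statements merged into one kernel-verified Lean document; each statement's English description precedes it below -/
import Mathlib

section
/- Let (Ξ, 𝒜, P) be a probability space and f : ℝⁿ × Ξ → ℝⁿ be such that for every x ∈ ℝⁿ the map ξ ↦ f(x,ξ) is Bochner integrable, and define F(x) := ∫_Ξ f(x,ξ) dP(ξ). Let q ≥ 2 and L : Ξ → ℝ be nonnegative with ∫ L^q dP < ∞, and suppose that for P-almost every ξ, ‖f(x,ξ) − f(y,ξ)‖ ≤ L(ξ)‖x − y‖ for all x, y ∈ ℝⁿ. Assume moreover that ξ ↦ ‖f(x,ξ) − F(x)‖ lies in L^q(P) for every x. Then the map x ↦ (∫_Ξ ‖f(x,ξ) − F(x)‖^q dP(ξ))^{1/q} is Lipschitz continuous on ℝⁿ with Lipschitz constant 𝓛_q := (∫ L^q dP)^{1/q} + ∫ L dP. -/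
open MeasureTheory
open scoped ENNReal NNReal

theorem stmt_3 {n : ℕ} {Ξ : Type*} [MeasurableSpace Ξ] (P : Measure Ξ)
    [IsProbabilityMeasure P]
    (f : EuclideanSpace ℝ (Fin n) → Ξ → EuclideanSpace ℝ (Fin n))
    (hf : ∀ x, Integrable (f x) P)
    (F : EuclideanSpace ℝ (Fin n) → EuclideanSpace ℝ (Fin n))
    (hF : ∀ x, F x = ∫ ξ, f x ξ ∂P)
    (q : ℝ) (hq : 2 ≤ q)
    (L : Ξ → ℝ) (hL0 : ∀ ξ, 0 ≤ L ξ)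
    (hLq : Integrable (fun ξ => L ξ ^ q) P)
    (hLip : ∀ᵐ ξ ∂P, ∀ x y : EuclideanSpace ℝ (Fin n),
      ‖f x ξ - f y ξ‖ ≤ L ξ * ‖x - y‖)
    (hεq : ∀ x, Integrable (fun ξ => ‖f x ξ - F x‖ ^ q) P)
    (Lq : ℝ) (hLqdef : Lq = (∫ ξ, L ξ ^ q ∂P) ^ (1 / q) + ∫ ξ, L ξ ∂P) :
    ∀ x y, |(∫ ξ, ‖f x ξ - F x‖ ^ q ∂P) ^ (1 / q)
        - (∫ ξ, ‖f y ξ - F y‖ ^ q ∂P) ^ (1 / q)| ≤ Lq * ‖x - y‖ := by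
  intro x y
  have hq0 : (0:ℝ) < q := by linarith
  set c : ℝ := ‖x - y‖ with hc
  have hc0 : (0:ℝ) ≤ c := norm_nonneg _
  set p : ℝ≥0∞ := ENNReal.ofReal q with hp
  have hpt : p.toReal = q := ENNReal.toReal_ofReal hq0.le
  have hp0 : p ≠ 0 := by
    simp only [hp, ne_eq, ENNReal.ofReal_eq_zero, not_le]; linarith
  have hptop : p ≠ ∞ := ENNReal.ofReal_ne_top
  have hp1 : 1 ≤ p := by
    rw [hp, ← ENNReal.ofReal_one]
    exact ENNReal.ofReal_le_ofReal (by linarith)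
  -- measurability of L
  have hLm : AEStronglyMeasurable L P := by
    have h1 : Continuous (fun t : ℝ => t ^ (1/q)) :=
      Real.continuous_rpow_const (by positivity)
    have := h1.comp_aestronglyMeasurable hLq.aestronglyMeasurable
    refine this.congr (Filter.Eventually.of_forall fun ξ => ?_)
    simp only [Function.comp]
    rw [← Real.rpow_mul (hL0 ξ), mul_one_div_cancel hq0.ne', Real.rpow_one]
  -- L ∈ Lᵖ
  have hLmem : MemLp L p P := by
    rw [← memLp_norm_rpow_iff hLm hp0 hptop, ENNReal.div_self hp0 hptop,
      memLp_one_iff_integrable]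
    refine hLq.congr (Filter.Eventually.of_forall fun ξ => ?_)
    simp [hpt, Real.norm_eq_abs, abs_of_nonneg (hL0 ξ)]
  have hLint : Integrable L P := hLmem.integrable hp1
  -- ε(z) ∈ Lᵖ
  have hmem : ∀ z, MemLp (fun ξ => f z ξ - F z) p P := by
    intro z
    have hasm : AEStronglyMeasurable (fun ξ => f z ξ - F z) P :=
      (hf z).aestronglyMeasurable.sub aestronglyMeasurable_const
    rw [← memLp_norm_rpow_iff hasm hp0 hptop, ENNReal.div_self hp0 hptop,
      memLp_one_iff_integrable]
    simpa [hpt] using hεq z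
  -- identification of the norm
  have key : ∀ z, (eLpNorm (fun ξ => f z ξ - F z) p P).toReal
      = (∫ ξ, ‖f z ξ - F z‖ ^ q ∂P) ^ (1 / q) := by
    intro z
    rw [(hmem z).eLpNorm_eq_integral_rpow_norm hp0 hptop, hpt,
      ENNReal.toReal_ofReal, one_div]
    apply Real.rpow_nonneg
    exact integral_nonneg fun ξ => by positivity
  -- bound on ‖F x - F y‖
  set D : ℝ := ‖F x - F y‖ with hD
  have hD0 : 0 ≤ D := norm_nonneg _
  have hFd : D ≤ (∫ ξ, L ξ ∂P) * c := by
    rw [hD, hF, hF, ← integral_sub (hf x) (hf y)]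
    calc ‖∫ ξ, (f x ξ - f y ξ) ∂P‖ ≤ ∫ ξ, ‖f x ξ - f y ξ‖ ∂P :=
          norm_integral_le_integral_norm _
      _ ≤ ∫ ξ, L ξ * c ∂P := by
          refine integral_mono_ae ((hf x).sub (hf y)).norm (hLint.mul_const c)
            (hLip.mono fun ξ h => h x y)
      _ = (∫ ξ, L ξ ∂P) * c := integral_mul_const c L
  -- eLpNorm of L and constants
  have hLnorm : (eLpNorm L p P).toReal = (∫ ξ, L ξ ^ q ∂P) ^ (1/q) := by
    rw [hLmem.eLpNorm_eq_integral_rpow_norm hp0 hptop, hpt, ENNReal.toReal_ofReal, one_div]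
    · congr 1
      exact integral_congr_ae (Filter.Eventually.of_forall fun ξ => by
        simp [Real.norm_eq_abs, abs_of_nonneg (hL0 ξ)])
    · apply Real.rpow_nonneg
      exact integral_nonneg fun ξ => by positivity
  -- bound the diff
  set G : Ξ → EuclideanSpace ℝ (Fin n) := fun ξ => f x ξ - F x with hG
  set H : Ξ → EuclideanSpace ℝ (Fin n) := fun ξ => f y ξ - F y with hH
  have hGm := (hmem x).aestronglyMeasurable
  have hHm := (hmem y).aestronglyMeasurable
  have hIq0 : 0 ≤ (∫ ξ, L ξ ^ q ∂P) ^ (1/q) :=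
    Real.rpow_nonneg (integral_nonneg fun ξ => Real.rpow_nonneg (hL0 ξ) q) _
  have hdiff : eLpNorm (fun ξ => G ξ - H ξ) p P
      ≤ ENNReal.ofReal ((∫ ξ, L ξ ^ q ∂P) ^ (1/q) * c + D) := by
    have step1 : eLpNorm (fun ξ => G ξ - H ξ) p P
        ≤ eLpNorm (fun ξ => L ξ * c + D) p P := by
      apply eLpNorm_mono_ae
      refine hLip.mono fun ξ h => ?_
      have h1 : G ξ - H ξ = (f x ξ - f y ξ) - (F x - F y) := by
        simp only [hG, hH]; abel
      rw [h1]
      refine le_trans (norm_sub_le _ _) ?_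
      refine le_trans (add_le_add_left (h x y) _) ?_
      exact le_abs_self _
    refine step1.trans ?_
    have step2 : eLpNorm (fun ξ => L ξ * c + D) p P
        ≤ eLpNorm (fun ξ => L ξ * c) p P + eLpNorm (fun _ => D) p P :=
      eLpNorm_add_le (hLm.mul_const c) aestronglyMeasurable_const hp1
    refine step2.trans ?_
    have e1 : eLpNorm (fun ξ => L ξ * c) p P = ENNReal.ofReal c * eLpNorm L p P := by
      have : (fun ξ => L ξ * c) = c • L := by funext ξ; simp [mul_comm]
      rw [this, eLpNorm_const_smul]
      simp [ENNReal.smul_def, Real.enorm_eq_ofReal hc0]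
    have e2 : eLpNorm (fun _ : Ξ => D) p P = ENNReal.ofReal D := by
      rw [eLpNorm_const D hp0 (IsProbabilityMeasure.ne_zero P)]
      simp [Real.enorm_eq_ofReal hD0]
    rw [e1, e2, ENNReal.ofReal_add (mul_nonneg hIq0 hc0) hD0]
    gcongr
    rw [mul_comm, ← hLnorm, ENNReal.ofReal_mul (ENNReal.toReal_nonneg),
      ENNReal.ofReal_toReal hLmem.eLpNorm_ne_top]
  -- triangle inequality in Lᵖ
  have tri : ∀ (u v : Ξ → EuclideanSpace ℝ (Fin n)),
      AEStronglyMeasurable u P → AEStronglyMeasurable v P →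
      eLpNorm u p P ≤ eLpNorm v p P + eLpNorm (fun ξ => u ξ - v ξ) p P := by
    intro u v hu hv
    have : u = fun ξ => v ξ + (u ξ - v ξ) := by funext ξ; abel
    nth_rewrite 1 [this]
    exact eLpNorm_add_le hv (hu.sub hv) hp1
  have hfinG := (hmem x).eLpNorm_ne_top
  have hfinH := (hmem y).eLpNorm_ne_top
  have hfind : eLpNorm (fun ξ => G ξ - H ξ) p P ≠ ∞ :=
    (hdiff.trans_lt ENNReal.ofReal_lt_top).ne
  set d : ℝ := (eLpNorm (fun ξ => G ξ - H ξ) p P).toReal with hd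
  have hdle : d ≤ (∫ ξ, L ξ ^ q ∂P) ^ (1/q) * c + D := by
    rw [hd]
    calc (eLpNorm (fun ξ => G ξ - H ξ) p P).toReal
        ≤ (ENNReal.ofReal ((∫ ξ, L ξ ^ q ∂P) ^ (1/q) * c + D)).toReal :=
          ENNReal.toReal_mono ENNReal.ofReal_ne_top hdiff
      _ = _ := ENNReal.toReal_ofReal (by exact add_nonneg (mul_nonneg hIq0 hc0) hD0)
  have habs : |(eLpNorm G p P).toReal - (eLpNorm H p P).toReal| ≤ d := by
    rw [abs_sub_le_iff]
    constructor
    · have h1 := tri G H hGm hHm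
      have := ENNReal.toReal_mono (by
        exact ENNReal.add_ne_top.mpr ⟨hfinH, hfind⟩) h1
      rw [ENNReal.toReal_add hfinH hfind] at this
      linarith
    · have h1 := tri H G hHm hGm
      have h2 : eLpNorm (fun ξ => H ξ - G ξ) p P = eLpNorm (fun ξ => G ξ - H ξ) p P := by
        rw [← eLpNorm_neg]
        congr 1; funext ξ; simp [neg_sub]
      rw [h2] at h1
      have := ENNReal.toReal_mono (ENNReal.add_ne_top.mpr ⟨hfinG, hfind⟩) h1
      rw [ENNReal.toReal_add hfinG hfind] at this
      linarith
  rw [← key x, ← key y]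
  refine habs.trans (hdle.trans ?_)
  rw [hLqdef, add_mul]
  have := add_le_add_left hFd ((∫ ξ, L ξ ^ q ∂P) ^ (1/q) * c)
  linarith
end

section
/- Let X ⊆ ℝⁿ be a convex set, let p : ℝⁿ → ℝ be a differentiable convex function, let s : ℝⁿ → ℝ be continuously differentiable with Bregman distance V(x,z) := s(z) − s(x) − ∇s(x)ᵀ(z − x), and let x̃ ∈ ℝⁿ. If u* ∈ X is a minimizer of u ↦ p(u) + V(x̃,u) over X, then for every u ∈ X, p(u*) + V(u*,u) + V(x̃,u*) ≤ p(u) + V(x̃,u). -/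
open RealInnerProductSpace

theorem stmt_4 {n : ℕ} (X : Set (EuclideanSpace ℝ (Fin n))) (hX : Convex ℝ X)
    (p : EuclideanSpace ℝ (Fin n) → ℝ) (hp : Differentiable ℝ p)
    (hpconv : ConvexOn ℝ Set.univ p)
    (s : EuclideanSpace ℝ (Fin n) → ℝ) (hs : ContDiff ℝ 1 s)
    (V : EuclideanSpace ℝ (Fin n) → EuclideanSpace ℝ (Fin n) → ℝ)
    (hV : ∀ x z, V x z = s z - s x - ⟪gradient s x, z - x⟫)
    (xt ustar : EuclideanSpace ℝ (Fin n)) (hu : ustar ∈ X)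
    (hmin : ∀ u ∈ X, p ustar + V xt ustar ≤ p u + V xt u) :
    ∀ u ∈ X, p ustar + V ustar u + V xt ustar ≤ p u + V xt u := by
  intro u huX
  have hE : True := trivial
  set v : EuclideanSpace ℝ (Fin n) := u - ustar with hv
  have hsd : Differentiable ℝ s := hs.differentiable one_ne_zero
  -- gradient facts
  have hgs : HasFDerivAt s (InnerProductSpace.toDual ℝ (EuclideanSpace ℝ (Fin n)) (gradient s ustar)) ustar := by
    rw [← hasGradientAt_iff_hasFDerivAt]
    exact (hsd ustar).hasGradientAt
  -- Step 2: convexity of p: fderiv p ustar v ≤ p u - p ustar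
  have hline : ∀ t : ℝ, HasDerivAt (fun t : ℝ => ustar + t • v) v t := by
    intro t
    simpa using ((hasDerivAt_id t).smul_const v).const_add ustar
  have hg : ∀ t : ℝ, HasDerivAt (fun t : ℝ => p (ustar + t • v)) (fderiv ℝ p (ustar + t • v) v) t := by
    intro t
    exact ((hp _).hasFDerivAt.comp_hasDerivAt t (hline t))
  have hgconv : ConvexOn ℝ (Set.univ : Set ℝ) (fun t : ℝ => p (ustar + t • v)) := by
    have := hpconv.comp_affineMap (AffineMap.lineMap (ustar : EuclideanSpace ℝ (Fin n)) (ustar + v))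
    have he : (p ∘ (AffineMap.lineMap (ustar : EuclideanSpace ℝ (Fin n)) (ustar + v))) = fun t : ℝ => p (ustar + t • v) := by
      funext t
      simp [AffineMap.lineMap_apply]
      rw [add_comm]
    rw [he] at this
    simpa using this
  have hslope : fderiv ℝ p ustar v ≤ p u - p ustar := by
    have := hgconv.le_slope_of_hasDerivAt (Set.mem_univ (0:ℝ)) (Set.mem_univ (1:ℝ))
      one_pos (by simpa using hg 0)
    simpa [slope, hv] using this
  -- Step 1: first-order optimality
  set T : EuclideanSpace ℝ (Fin n) →L[ℝ] ℝ := InnerProductSpace.toDual ℝ (EuclideanSpace ℝ (Fin n)) (gradient s xt) with hT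
  have hfeq : (fun w => p w + V xt w) = fun w => p w + s w - s xt - (T w - T xt) := by
    funext w
    rw [hV]
    simp [hT, InnerProductSpace.toDual_apply_apply, inner_sub_right]
    ring
  have hDf : HasFDerivAt (fun w => p w + V xt w)
      ((fderiv ℝ p ustar + InnerProductSpace.toDual ℝ (EuclideanSpace ℝ (Fin n)) (gradient s ustar)) - T) ustar := by
    rw [hfeq]
    exact (((hp ustar).hasFDerivAt.add hgs).sub_const (s xt)).sub (T.hasFDerivAt.sub_const (T xt))
  have hmem : v ∈ posTangentConeAt X ustar :=
    sub_mem_posTangentConeAt_of_segment_subset (hX.segment_subset hu huX)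
  have hlm : IsLocalMinOn (fun w => p w + V xt w) X ustar := by
    have : IsMinOn (fun w => p w + V xt w) X ustar := fun w hw => hmin w hw
    exact this.filter_mono (Filter.le_principal_iff.2 self_mem_nhdsWithin)
  have hopt := hlm.hasFDerivWithinAt_nonneg hDf.hasFDerivWithinAt hmem
  have hopt' : 0 ≤ fderiv ℝ p ustar v + ⟪gradient s ustar, v⟫ - ⟪gradient s xt, v⟫ := by
    simpa [hT, InnerProductSpace.toDual_apply_apply] using hopt
  -- combine
  rw [hV, hV, hV]
  have h1 : ⟪gradient s xt, u - xt⟫ = ⟪gradient s xt, v⟫ + ⟪gradient s xt, ustar - xt⟫ := by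
    rw [← inner_add_right]; congr 1; simp [hv]
  rw [h1]
  nlinarith [hslope, hopt']
end

section
/- Let s : ℝⁿ → ℝ be continuously differentiable and α-strongly convex (α > 0), so that its Bregman distance satisfies V(x,x') ≥ (α/2)‖x − x'‖². Let θ ∈ (0,1), γ > 0, x, x' ∈ ℝⁿ with x ≠ x', and u, v ∈ ℝⁿ, L̄ ≥ 1. If ‖u − v‖ ≤ L̄‖x − x'‖ and the line-search inequality fails at stepsize θ⁻¹γ, i.e. θ⁻²γ²‖u − v‖² > α V(x,x'), then γ ≥ αθ/(√2 · L̄). -/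
open RealInnerProductSpace

/-- Bregman distance lower bound from strong monotonicity of the gradient. -/
lemma bregman_lower {n : ℕ} (s : EuclideanSpace ℝ (Fin n) → ℝ) (α : ℝ)
    (hs : ContDiff ℝ 1 s)
    (hstrong : ∀ x y : EuclideanSpace ℝ (Fin n),
      α * ‖x - y‖ ^ 2 ≤ ⟪gradient s x - gradient s y, x - y⟫)
    (x z : EuclideanSpace ℝ (Fin n)) :
    α / 2 * ‖z - x‖ ^ 2 ≤ s z - s x - ⟪gradient s x, z - x⟫ := by
  set d := z - x with hd
  have hdiff : Differentiable ℝ s := hs.differentiable one_ne_zero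
  set g : ℝ → ℝ := fun t => s (x + t • d) - t * ⟪gradient s x, d⟫ - α * t ^ 2 * ‖d‖ ^ 2 / 2
    with hg
  have hgderiv : ∀ t : ℝ, HasDerivAt g
      (⟪gradient s (x + t • d), d⟫ - ⟪gradient s x, d⟫ - α * t * ‖d‖ ^ 2) t := by
    intro t
    have hline : HasDerivAt (fun t : ℝ => x + t • d) d t := by
      simpa using ((hasDerivAt_id t).smul_const d).const_add x
    have h1 : HasDerivAt (fun t : ℝ => s (x + t • d)) (⟪gradient s (x + t • d), d⟫) t := by
      have hfd := (hdiff (x + t • d)).hasGradientAt.hasFDerivAt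
      have := hfd.comp_hasDerivAt t hline
      rw [← InnerProductSpace.toDual_apply_apply]
      exact this
    have h2 : HasDerivAt (fun t : ℝ => t * ⟪gradient s x, d⟫) (⟪gradient s x, d⟫) t := by
      simpa using (hasDerivAt_id t).mul_const (⟪gradient s x, d⟫)
    have h3 : HasDerivAt (fun t : ℝ => α * t ^ 2 * ‖d‖ ^ 2 / 2) (α * t * ‖d‖ ^ 2) t := by
      have : HasDerivAt (fun t : ℝ => t ^ 2) (2 * t) t := by
        simpa using hasDerivAt_pow 2 t
      have := ((this.const_mul α).mul_const (‖d‖ ^ 2)).div_const 2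
      rw [show α * t * ‖d‖ ^ 2 = α * (2 * t) * ‖d‖ ^ 2 / 2 by ring]
      exact this
    exact (h1.sub h2).sub h3
  have hmono : MonotoneOn g (Set.Icc (0 : ℝ) 1) := by
    apply monotoneOn_of_deriv_nonneg (convex_Icc 0 1)
    · exact Continuous.continuousOn (by
        fun_prop)
    · intro t ht
      exact (hgderiv t).differentiableAt.differentiableWithinAt
    · intro t ht
      rw [interior_Icc] at ht
      rw [(hgderiv t).deriv]
      have ht0 : 0 < t := ht.1
      have key := hstrong (x + t • d) x
      have hxd : x + t • d - x = t • d := by abel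
      rw [hxd] at key
      have : α * ‖t • d‖ ^ 2 ≤ t * (⟪gradient s (x + t • d), d⟫ - ⟪gradient s x, d⟫) := by
        calc α * ‖t • d‖ ^ 2 ≤ ⟪gradient s (x + t • d) - gradient s x, t • d⟫ := key
          _ = t * (⟪gradient s (x + t • d), d⟫ - ⟪gradient s x, d⟫) := by
            rw [real_inner_smul_right, inner_sub_left]
      rw [norm_smul] at this
      have h2 : α * t * ‖d‖ ^ 2 ≤ ⟪gradient s (x + t • d), d⟫ - ⟪gradient s x, d⟫ := by
        have habs : ‖t‖ = t := by rw [Real.norm_eq_abs]; exact abs_of_pos ht0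
        rw [habs] at this
        nlinarith
      linarith
  have h01 := hmono (Set.mem_Icc.2 ⟨le_refl 0, zero_le_one⟩)
      (Set.mem_Icc.2 ⟨zero_le_one, le_refl 1⟩) zero_le_one
  have hz : x + (1 : ℝ) • d = z := by rw [one_smul, hd]; abel
  have hg0 : g 0 = s x := by
    simp only [hg]
    norm_num
  have hg1 : g 1 = s z - ⟪gradient s x, d⟫ - α * ‖d‖ ^ 2 / 2 := by
    simp only [hg, hz]
    ring_nf
  rw [hg0, hg1] at h01
  linarith

theorem stmt_6 {n : ℕ} (s : EuclideanSpace ℝ (Fin n) → ℝ) (α : ℝ) (hα : 0 < α)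
    (hs : ContDiff ℝ 1 s)
    (hstrong : ∀ x y : EuclideanSpace ℝ (Fin n),
      α * ‖x - y‖ ^ 2 ≤ ⟪gradient s x - gradient s y, x - y⟫)
    (V : EuclideanSpace ℝ (Fin n) → EuclideanSpace ℝ (Fin n) → ℝ)
    (hV : ∀ x z, V x z = s z - s x - ⟪gradient s x, z - x⟫)
    (θ γ : ℝ) (hθ : θ ∈ Set.Ioo (0 : ℝ) 1) (hγ : 0 < γ)
    (x x' : EuclideanSpace ℝ (Fin n)) (hxx : x ≠ x')
    (u v : EuclideanSpace ℝ (Fin n)) (Lb : ℝ) (hLb : 1 ≤ Lb)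
    (huv : ‖u - v‖ ≤ Lb * ‖x - x'‖)
    (hfail : α * V x x' < θ⁻¹ ^ 2 * γ ^ 2 * ‖u - v‖ ^ 2) :
    α * θ / (Real.sqrt 2 * Lb) ≤ γ := by
  obtain ⟨hθ0, hθ1⟩ := hθ
  have hVlb : α / 2 * ‖x' - x‖ ^ 2 ≤ V x x' := by
    rw [hV]; exact bregman_lower s α hs hstrong x x'
  have hnorm : ‖x' - x‖ = ‖x - x'‖ := norm_sub_rev _ _
  have hpos : 0 < ‖x - x'‖ := by
    rw [norm_pos_iff]; exact sub_ne_zero_of_ne hxx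
  have huv2 : ‖u - v‖ ^ 2 ≤ Lb ^ 2 * ‖x - x'‖ ^ 2 := by
    have h0 : 0 ≤ ‖u - v‖ := norm_nonneg _
    nlinarith
  have hchain : α * (α / 2 * ‖x - x'‖ ^ 2) < θ⁻¹ ^ 2 * γ ^ 2 * (Lb ^ 2 * ‖x - x'‖ ^ 2) := by
    calc α * (α / 2 * ‖x - x'‖ ^ 2) ≤ α * V x x' := by
          rw [hnorm] at hVlb; nlinarith
      _ < θ⁻¹ ^ 2 * γ ^ 2 * ‖u - v‖ ^ 2 := hfail
      _ ≤ θ⁻¹ ^ 2 * γ ^ 2 * (Lb ^ 2 * ‖x - x'‖ ^ 2) := by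
          have : 0 ≤ θ⁻¹ ^ 2 * γ ^ 2 := by positivity
          nlinarith
  have hθinv : θ⁻¹ = 1 / θ := by rw [one_div]
  have hkey : α ^ 2 * θ ^ 2 ≤ 2 * γ ^ 2 * Lb ^ 2 := by
    have hθ2 : θ ^ 2 > 0 := by positivity
    have h := hchain
    rw [hθinv] at h
    have hx2 : 0 < ‖x - x'‖ ^ 2 := by positivity
    have h' : α * (α / 2) < (1 / θ) ^ 2 * γ ^ 2 * Lb ^ 2 := by
      nlinarith
    have : α ^ 2 * θ ^ 2 < 2 * γ ^ 2 * Lb ^ 2 := by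
      have := mul_lt_mul_of_pos_right h' hθ2
      field_simp at this
      nlinarith
    linarith
  have hs2 : Real.sqrt 2 ^ 2 = 2 := Real.sq_sqrt (by norm_num)
  have hs2pos : 0 < Real.sqrt 2 := Real.sqrt_pos.2 (by norm_num)
  have hLbpos : 0 < Lb := lt_of_lt_of_le one_pos hLb
  have hsq : (α * θ / (Real.sqrt 2 * Lb)) ^ 2 ≤ γ ^ 2 := by
    rw [div_pow, mul_pow, mul_pow, hs2]
    rw [div_le_iff₀ (by positivity)]
    nlinarith
  calc α * θ / (Real.sqrt 2 * Lb) = Real.sqrt ((α * θ / (Real.sqrt 2 * Lb)) ^ 2) := by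
        rw [Real.sqrt_sq (by positivity)]
    _ ≤ Real.sqrt (γ ^ 2) := Real.sqrt_le_sqrt hsq
    _ = γ := Real.sqrt_sq hγ.le
end

section
/- Let X ⊆ ℝⁿ be a nonempty closed convex set, F : ℝⁿ → ℝⁿ continuous, s : ℝⁿ → ℝ continuously differentiable and α-strongly convex (α > 0) with Bregman distance V and prox-mapping P_X(x,r) := argmin_{z∈X} (rᵀz + V(x,z)). Let (x_k) ⊆ X and (γ_k) ⊆ (0,1] be sequences such that (i) V(x_k, P_X(x_k, γ_k F(x_k))) → 0 as k → ∞, (ii) there exist K ∈ ℕ and γ* > 0 with γ_k ≥ γ* for all k ≥ K, and (iii) the sequence (x_k) is bounded. Then there exists an accumulation point x̂ of (x_k) (a limit of some subsequence) such that x̂ ∈ X and F(x̂)ᵀ(z − x̂) ≥ 0 for all z ∈ X. -/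
open RealInnerProductSpace

variable {n : ℕ}
local notation "E" => EuclideanSpace ℝ (Fin n)

lemma line_deriv (s : E → ℝ) (hs : ContDiff ℝ 1 s) (x w : E) (t : ℝ) :
    HasDerivAt (fun t : ℝ => s (x + t • w)) ⟪gradient s (x + t • w), w⟫ t := by
  have hL : HasDerivAt (fun t : ℝ => x + t • w) w t := by
    simpa using ((hasDerivAt_id t).smul_const w).const_add x
  have hf : HasFDerivAt s (fderiv ℝ s (x + t • w)) (x + t • w) :=
    (hs.differentiable one_ne_zero _).hasFDerivAt
  have := hf.comp_hasDerivAt t hL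
  convert this using 1
  exacts [rfl, rfl, rfl, by simp [gradient, InnerProductSpace.toDual_symm_apply]]

lemma strong_bound (s : E → ℝ) (hs : ContDiff ℝ 1 s) (α : ℝ)
    (hstrong : ∀ x y : E, α * ‖x - y‖ ^ 2 ≤ ⟪gradient s x - gradient s y, x - y⟫)
    (x z : E) :
    α / 2 * ‖z - x‖ ^ 2 ≤ s z - s x - ⟪gradient s x, z - x⟫ := by
  set w := z - x with hw
  set g : ℝ → ℝ := fun t => s (x + t • w) - t * ⟪gradient s x, w⟫ - α / 2 * t ^ 2 * ‖w‖ ^ 2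
    with hg
  set g' : ℝ → ℝ := fun t =>
    ⟪gradient s (x + t • w), w⟫ - ⟪gradient s x, w⟫ - α * t * ‖w‖ ^ 2 with hg'
  have hd : ∀ t : ℝ, HasDerivAt g (g' t) t := by
    intro t
    have h1 := line_deriv s hs x w t
    have h2 : HasDerivAt (fun t : ℝ => t * ⟪gradient s x, w⟫) ⟪gradient s x, w⟫ t := by
      simpa using (hasDerivAt_id t).mul_const ⟪gradient s x, w⟫
    have h3 : HasDerivAt (fun t : ℝ => α / 2 * t ^ 2 * ‖w‖ ^ 2) (α * t * ‖w‖ ^ 2) t := by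
      have := ((hasDerivAt_pow 2 t).const_mul (α / 2)).mul_const (‖w‖ ^ 2)
      exact this.congr_deriv (by rw [show (2:ℕ) - 1 = 1 from rfl, pow_one, Nat.cast_ofNat]; ring)
    exact (h1.sub h2).sub h3
  have hnn : ∀ t ∈ interior (Set.Icc (0:ℝ) 1), 0 ≤ g' t := by
    intro t ht
    rw [interior_Icc] at ht
    have h := hstrong (x + t • w) x
    have he : (x + t • w) - x = t • w := by abel
    rw [he, norm_smul, inner_sub_left, real_inner_smul_right, real_inner_smul_right] at h
    simp only [Real.norm_eq_abs, mul_pow, sq_abs] at h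
    have ht0 : 0 < t := ht.1
    simp only [hg']
    nlinarith [h, ht0]
  have hmono : MonotoneOn g (Set.Icc (0:ℝ) 1) := by
    apply monotoneOn_of_hasDerivWithinAt_nonneg (convex_Icc 0 1)
      (fun t _ => (hd t).continuousAt.continuousWithinAt)
      (fun t _ => (hd t).hasDerivWithinAt) hnn
  have h01 := hmono (Set.left_mem_Icc.2 zero_le_one) (Set.right_mem_Icc.2 zero_le_one)
    zero_le_one
  have hz : x + (1:ℝ) • w = z := by simp [hw]
  simp only [hg, hz, zero_smul, add_zero, one_pow, zero_pow, mul_zero, zero_mul, sub_zero,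
    one_mul] at h01
  linarith

lemma grad_cont (s : E → ℝ) (hs : ContDiff ℝ 1 s) : Continuous (gradient s) := by
  have h := hs.continuous_fderiv one_ne_zero
  exact (InnerProductSpace.toDual ℝ E).symm.continuous.comp h

lemma small_o (s : E → ℝ) (hs : ContDiff ℝ 1 s) (x w : E) :
    Filter.Tendsto (fun t : ℝ => (s (x + t • w) - s x - t * ⟪gradient s x, w⟫) / t)
      (nhdsWithin 0 (Set.Ioi 0)) (nhds 0) := by
  have hD : HasDerivAt (fun t : ℝ => s (x + t • w)) ⟪gradient s x, w⟫ 0 := by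
    simpa using line_deriv s hs x w 0
  have hS := hasDerivAt_iff_tendsto_slope.1 hD
  have hS' : Filter.Tendsto (slope (fun t : ℝ => s (x + t • w)) 0)
      (nhdsWithin 0 (Set.Ioi 0)) (nhds ⟪gradient s x, w⟫) :=
    hS.mono_left (nhdsWithin_mono 0 fun t ht => ne_of_gt ht)
  have := hS'.sub_const ⟪gradient s x, w⟫
  rw [sub_self] at this
  apply this.congr'
  filter_upwards [self_mem_nhdsWithin] with t (ht : 0 < t)
  rw [slope_def_field]
  simp only [zero_smul, add_zero, sub_zero]
  field_simp
theorem stmt_7 {n : ℕ} (X : Set (EuclideanSpace ℝ (Fin n)))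
    (hXne : X.Nonempty) (hXcl : IsClosed X) (hXconv : Convex ℝ X)
    (F : EuclideanSpace ℝ (Fin n) → EuclideanSpace ℝ (Fin n)) (hFcont : Continuous F)
    (s : EuclideanSpace ℝ (Fin n) → ℝ) (α : ℝ) (hα : 0 < α) (hs : ContDiff ℝ 1 s)
    (hstrong : ∀ x y : EuclideanSpace ℝ (Fin n),
      α * ‖x - y‖ ^ 2 ≤ ⟪gradient s x - gradient s y, x - y⟫)
    (V : EuclideanSpace ℝ (Fin n) → EuclideanSpace ℝ (Fin n) → ℝ)
    (hV : ∀ x z, V x z = s z - s x - ⟪gradient s x, z - x⟫)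
    (Pr : EuclideanSpace ℝ (Fin n) → EuclideanSpace ℝ (Fin n) → EuclideanSpace ℝ (Fin n))
    (hPmem : ∀ x r, Pr x r ∈ X)
    (hPmin : ∀ x r, ∀ z ∈ X, ⟪r, Pr x r⟫ + V x (Pr x r) ≤ ⟪r, z⟫ + V x z)
    (x : ℕ → EuclideanSpace ℝ (Fin n)) (hx : ∀ k, x k ∈ X)
    (γ : ℕ → ℝ) (hγ : ∀ k, γ k ∈ Set.Ioc (0 : ℝ) 1)
    (h1 : Filter.Tendsto (fun k => V (x k) (Pr (x k) (γ k • F (x k))))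
      Filter.atTop (nhds 0))
    (h2 : ∃ K : ℕ, ∃ γs : ℝ, 0 < γs ∧ ∀ k ≥ K, γs ≤ γ k)
    (h3 : Bornology.IsBounded (Set.range x)) :
    ∃ xhat ∈ X,
      (∃ φ : ℕ → ℕ, StrictMono φ ∧
        Filter.Tendsto (x ∘ φ) Filter.atTop (nhds xhat)) ∧
      ∀ z ∈ X, 0 ≤ ⟪F xhat, z - xhat⟫ := by
  set y : ℕ → EuclideanSpace ℝ (Fin n) := fun k => Pr (x k) (γ k • F (x k)) with hy
  have hVlb : ∀ a b : EuclideanSpace ℝ (Fin n), α / 2 * ‖b - a‖ ^ 2 ≤ V a b := fun a b => by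
    rw [hV]; exact strong_bound s hs α hstrong a b
  have hVnn : ∀ a b : EuclideanSpace ℝ (Fin n), 0 ≤ V a b := fun a b => le_trans (by positivity) (hVlb a b)
  -- y k - x k → 0
  have hsq : Filter.Tendsto (fun k => ‖y k - x k‖ ^ 2) Filter.atTop (nhds 0) := by
    have hb : Filter.Tendsto (fun k => 2 / α * V (x k) (y k)) Filter.atTop (nhds 0) := by
      simpa using h1.const_mul (2 / α)
    refine squeeze_zero (fun k => by positivity) (fun k => ?_) hb
    have := hVlb (x k) (y k)
    rw [div_mul_eq_mul_div, le_div_iff₀ hα] at *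
    nlinarith [hVlb (x k) (y k)]
  have hyx : Filter.Tendsto (fun k => y k - x k) Filter.atTop (nhds 0) := by
    rw [tendsto_zero_iff_norm_tendsto_zero]
    have := (Real.continuous_sqrt.tendsto 0).comp hsq
    simpa [Real.sqrt_sq (norm_nonneg _), Function.comp_def] using this
  obtain ⟨xhat, _, φ, hφ, hxφ⟩ := tendsto_subseq_of_bounded h3 fun k => Set.mem_range_self k
  have hxhatX : xhat ∈ X :=
    hXcl.mem_of_tendsto hxφ (Filter.Eventually.of_forall fun k => hx (φ k))
  obtain ⟨γbar, hγbarIcc, ψ, hψ, hγψ⟩ :=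
    (isCompact_Icc (a := (0:ℝ)) (b := 1)).tendsto_subseq
      (x := γ ∘ φ) fun k => ⟨(hγ (φ k)).1.le, (hγ (φ k)).2⟩
  set σ : ℕ → ℕ := φ ∘ ψ with hσdef
  have hσ : StrictMono σ := hφ.comp hψ
  have hxσ : Filter.Tendsto (x ∘ σ) Filter.atTop (nhds xhat) := hxφ.comp hψ.tendsto_atTop
  have hyσ : Filter.Tendsto (y ∘ σ) Filter.atTop (nhds xhat) := by
    have h0 := (hyx.comp hσ.tendsto_atTop).add hxσ
    simpa [Function.comp_def] using h0
  obtain ⟨K, γs, hγs, hK⟩ := h2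
  have hγσ : Filter.Tendsto (γ ∘ σ) Filter.atTop (nhds γbar) := hγψ
  have hγbar : 0 < γbar := by
    refine lt_of_lt_of_le hγs (ge_of_tendsto hγσ ?_)
    filter_upwards [Filter.eventually_ge_atTop K] with k hk
    exact hK (σ k) (le_trans hk (hσ.le_apply))
  refine ⟨xhat, hxhatX, ⟨σ, hσ, hxσ⟩, ?_⟩
  have key : ∀ z' ∈ X, γbar * ⟪F xhat, xhat - z'⟫ ≤ V xhat z' := by
    intro z' hz'
    have hk : ∀ k, γ k * ⟪F (x k), y k - z'⟫ ≤ V (x k) z' := by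
      intro k
      have h := hPmin (x k) (γ k • F (x k)) z' hz'
      rw [real_inner_smul_left, real_inner_smul_left] at h
      have hnn := hVnn (x k) (y k)
      rw [inner_sub_right]
      nlinarith [h, hnn]
    have hL : Filter.Tendsto (fun k => γ (σ k) * ⟪F (x (σ k)), y (σ k) - z'⟫)
        Filter.atTop (nhds (γbar * ⟪F xhat, xhat - z'⟫)) := by
      refine Filter.Tendsto.mul hγσ ?_
      exact Filter.Tendsto.inner ((hFcont.tendsto xhat).comp hxσ)
        (hyσ.sub tendsto_const_nhds)
    have hR : Filter.Tendsto (fun k => V (x (σ k)) z')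
        Filter.atTop (nhds (V xhat z')) := by
      simp only [hV]
      have h1' := (hs.continuous.tendsto xhat).comp hxσ
      have h2' : Filter.Tendsto (fun k => ⟪gradient s (x (σ k)), z' - x (σ k)⟫)
          Filter.atTop (nhds ⟪gradient s xhat, z' - xhat⟫) :=
        Filter.Tendsto.inner (((grad_cont s hs).tendsto xhat).comp hxσ)
          (tendsto_const_nhds.sub hxσ)
      exact (tendsto_const_nhds.sub h1').sub h2'
    exact le_of_tendsto_of_tendsto' hL hR fun k => hk (σ k)
  intro z hz
  have hineq : ∀ t ∈ Set.Ioc (0:ℝ) 1,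
      γbar * ⟪F xhat, xhat - z⟫ ≤ (s (xhat + t • (z - xhat)) - s xhat - t * ⟪gradient s xhat, z - xhat⟫) / t := by
    intro t ht
    have hz' : xhat + t • (z - xhat) ∈ X := by
      have := hXconv hxhatX hz (by linarith [ht.2] : (0:ℝ) ≤ 1 - t) ht.1.le (by ring)
      convert this using 1
      simp only [smul_sub]
      module
    have h := key (xhat + t • (z - xhat)) hz'
    have he : xhat - (xhat + t • (z - xhat)) = t • (xhat - z) := by
      module
    rw [he, real_inner_smul_right] at h
    rw [hV] at h
    have he2 : (xhat + t • (z - xhat)) - xhat = t • (z - xhat) := by abel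
    rw [he2, real_inner_smul_right] at h
    rw [le_div_iff₀ ht.1]
    nlinarith [h]
  have hlim := small_o s hs xhat (z - xhat)
  have hfin : γbar * ⟪F xhat, xhat - z⟫ ≤ 0 := by
    refine ge_of_tendsto hlim ?_
    filter_upwards [Ioc_mem_nhdsGT_of_mem (Set.left_mem_Ico.2 zero_lt_one)] with t ht
    exact hineq t ht
  have : ⟪F xhat, xhat - z⟫ ≤ 0 := by nlinarith [hfin]
  rw [show z - xhat = -(xhat - z) by abel, inner_neg_right]
  linarith
end

section
/- Let X ⊆ ℝⁿ be a nonempty closed convex set, s : ℝⁿ → ℝ continuously differentiable and α-strongly convex (α > 0) with Bregman distance V and prox-mapping P_X. Let x, x* ∈ X, g₁, g₂ ∈ ℝⁿ, γ > 0, and set y := P_X(x, γ g₁) and z := P_X(x, γ g₂). If the line-search condition γ²‖g₁ − g₂‖² ≤ α V(x,y) holds, then γ g₂ᵀ(y − x*) + (1/2) V(x,y) + V(z, x*) ≤ V(x, x*). In particular, if additionally g₂ᵀ(y − x*) ≥ 0, then (1/2) V(x,y) ≤ V(x,x*) − V(z,x*). -/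
open RealInnerProductSpace

set_option maxHeartbeats 1000000 in
theorem stmt_8 {n : ℕ} (X : Set (EuclideanSpace ℝ (Fin n)))
    (hXne : X.Nonempty) (hXcl : IsClosed X) (hXconv : Convex ℝ X)
    (s : EuclideanSpace ℝ (Fin n) → ℝ) (α : ℝ) (hα : 0 < α) (hs : ContDiff ℝ 1 s)
    (hstrong : ∀ x y : EuclideanSpace ℝ (Fin n),
      α * ‖x - y‖ ^ 2 ≤ ⟪gradient s x - gradient s y, x - y⟫)
    (V : EuclideanSpace ℝ (Fin n) → EuclideanSpace ℝ (Fin n) → ℝ)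
    (hV : ∀ x z, V x z = s z - s x - ⟪gradient s x, z - x⟫)
    (Pr : EuclideanSpace ℝ (Fin n) → EuclideanSpace ℝ (Fin n) → EuclideanSpace ℝ (Fin n))
    (hPmem : ∀ x r, Pr x r ∈ X)
    (hPmin : ∀ x r, ∀ w ∈ X, ⟪r, Pr x r⟫ + V x (Pr x r) ≤ ⟪r, w⟫ + V x w)
    (x xstar : EuclideanSpace ℝ (Fin n)) (hx : x ∈ X) (hxstar : xstar ∈ X)
    (g₁ g₂ : EuclideanSpace ℝ (Fin n)) (γ : ℝ) (hγ : 0 < γ)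
    (y z : EuclideanSpace ℝ (Fin n))
    (hy : y = Pr x (γ • g₁)) (hz : z = Pr x (γ • g₂))
    (hls : γ ^ 2 * ‖g₁ - g₂‖ ^ 2 ≤ α * V x y) :
    γ * ⟪g₂, y - xstar⟫ + 1 / 2 * V x y + V z xstar ≤ V x xstar ∧
      (0 ≤ ⟪g₂, y - xstar⟫ → 1 / 2 * V x y ≤ V x xstar - V z xstar) := by
  have hdiff : ∀ p, DifferentiableAt ℝ s p := fun p => (hs.differentiable one_ne_zero).differentiableAt
  -- derivative along a segment
  have hline : ∀ (a v : EuclideanSpace ℝ (Fin n)) (t : ℝ),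
      HasDerivAt (fun t : ℝ => s (a + t • v)) ⟪gradient s (a + t • v), v⟫ t := by
    intro a v t
    have hc : HasDerivAt (fun t : ℝ => a + t • v) v t := by
      simpa using ((hasDerivAt_id t).smul_const v).const_add a
    have := ((hdiff (a + t • v)).hasGradientAt.hasFDerivAt).comp_hasDerivAt t hc
    exact this
  -- strong convexity lower bound
  have hlb : ∀ a b : EuclideanSpace ℝ (Fin n),
      s a + ⟪gradient s a, b - a⟫ + α / 2 * ‖b - a‖ ^ 2 ≤ s b := by
    intro a b
    set v := b - a with hv
    set φ : ℝ → ℝ := fun t => s (a + t • v) - t * ⟪gradient s a, v⟫ - α / 2 * t ^ 2 * ‖v‖ ^ 2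
      with hφ
    have hφd : ∀ t, HasDerivAt φ
        (⟪gradient s (a + t • v), v⟫ - ⟪gradient s a, v⟫ - α * t * ‖v‖ ^ 2) t := by
      intro t
      have h2 : HasDerivAt (fun t : ℝ => t * ⟪gradient s a, v⟫) ⟪gradient s a, v⟫ t := by
        simpa using (hasDerivAt_id t).mul_const ⟪gradient s a, v⟫
      have h3 : HasDerivAt (fun t : ℝ => α / 2 * t ^ 2 * ‖v‖ ^ 2) (α * t * ‖v‖ ^ 2) t := by
        have := ((hasDerivAt_pow 2 t).const_mul (α / 2)).mul_const (‖v‖ ^ 2)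
        exact this.congr_deriv (by push_cast; ring)
      exact ((hline a v t).sub h2).sub h3
    have hmono : MonotoneOn φ (Set.Icc (0 : ℝ) 1) := by
      apply monotoneOn_of_deriv_nonneg (convex_Icc 0 1)
      · exact fun t _ => (hφd t).continuousAt.continuousWithinAt
      · exact fun t _ => (hφd t).differentiableAt.differentiableWithinAt
      · intro t ht
        rw [interior_Icc] at ht
        rw [(hφd t).deriv]
        have hst := hstrong (a + t • v) a
        rw [add_sub_cancel_left] at hst
        rw [inner_sub_left, real_inner_smul_right, real_inner_smul_right, norm_smul] at hst
        have ht0 : 0 < t := ht.1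
        rw [Real.norm_eq_abs t, abs_of_pos ht0] at hst
        nlinarith [hst, sq_nonneg ‖v‖]
    have h01 := hmono (Set.mem_Icc.2 ⟨le_refl 0, zero_le_one⟩)
      (Set.mem_Icc.2 ⟨zero_le_one, le_refl 1⟩) zero_le_one
    have e0 : φ 0 = s a := by simp [hφ]
    have e1 : φ 1 = s b - ⟪gradient s a, v⟫ - α / 2 * ‖v‖ ^ 2 := by
      simp [hφ, hv]
    rw [e0, e1] at h01
    linarith
  -- variational inequality for the prox mapping
  have hVI : ∀ (r w : EuclideanSpace ℝ (Fin n)), w ∈ X →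
      0 ≤ ⟪r, w - Pr x r⟫ + ⟪gradient s (Pr x r), w - Pr x r⟫ - ⟪gradient s x, w - Pr x r⟫ := by
    intro r w hw
    set P := Pr x r with hP
    set v := w - P with hv
    set ψ : ℝ → ℝ := fun t => ⟪r, P + t • v⟫ + V x (P + t • v) with hψ
    have hψd : ∀ t, HasDerivAt ψ
        (⟪r, v⟫ + ⟪gradient s (P + t • v), v⟫ - ⟪gradient s x, v⟫) t := by
      intro t
      have hrw : ψ = fun t : ℝ => (s (P + t • v))
          + (⟪r, P⟫ + t * ⟪r, v⟫ - s x - (⟪gradient s x, P - x⟫ + t * ⟪gradient s x, v⟫)) := by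
        funext t
        simp only [hψ, hV]
        have : P + t • v - x = (P - x) + t • v := by abel
        rw [this, inner_add_right, inner_add_right, real_inner_smul_right,
          real_inner_smul_right]
        ring
      rw [hrw]
      have h2 : HasDerivAt (fun t : ℝ =>
          ⟪r, P⟫ + t * ⟪r, v⟫ - s x - (⟪gradient s x, P - x⟫ + t * ⟪gradient s x, v⟫))
          (⟪r, v⟫ - ⟪gradient s x, v⟫) t := by
        have ha : HasDerivAt (fun t : ℝ => ⟪r, P⟫ + t * ⟪r, v⟫ - s x) ⟪r, v⟫ t := by
          simpa using (((hasDerivAt_id t).mul_const ⟪r, v⟫).const_add ⟪r, P⟫).sub_const (s x)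
        have hb : HasDerivAt (fun t : ℝ => ⟪gradient s x, P - x⟫ + t * ⟪gradient s x, v⟫)
            ⟪gradient s x, v⟫ t := by
          simpa using ((hasDerivAt_id t).mul_const ⟪gradient s x, v⟫).const_add
            ⟪gradient s x, P - x⟫
        exact ha.sub hb
      have := (hline P v t).add h2
      exact this.congr_deriv (by ring)
    have hmemt : ∀ t ∈ Set.Icc (0 : ℝ) 1, P + t • v ∈ X := by
      intro t ht
      have := hXconv (hPmem x r) hw (by linarith [ht.2] : (0:ℝ) ≤ 1 - t) ht.1 (by ring)
      convert this using 1
      simp only [hv]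
      module
    have hminOn : IsMinOn ψ (Set.Icc (0 : ℝ) 1) 0 := by
      intro t ht
      simp only [hψ, Set.mem_setOf_eq]
      have h0 : P + (0 : ℝ) • v = P := by simp
      rw [h0]
      exact hPmin x r _ (hmemt t ht)
    have hcone : (1 : ℝ) ∈ posTangentConeAt (Set.Icc (0 : ℝ) 1) 0 := by
      have : (1 : ℝ) - 0 ∈ posTangentConeAt (Set.Icc (0 : ℝ) 1) 0 :=
        sub_mem_posTangentConeAt_of_segment_subset (by rw [segment_eq_Icc zero_le_one])
      simpa using this
    have hd0 := (hψd 0).hasFDerivAt.hasFDerivWithinAt (s := Set.Icc (0 : ℝ) 1)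
    have := hminOn.localize.hasFDerivWithinAt_nonneg hd0 hcone
    simp only [ContinuousLinearMap.smulRight_apply, ContinuousLinearMap.one_apply,
      one_smul, zero_smul, add_zero] at this
    simpa [hv] using this
  -- inequality (A): r = γ • g₂, w = xstar, P = z
  have hA : γ * ⟪g₂, z - xstar⟫ + V x z + V z xstar ≤ V x xstar := by
    have h := hVI (γ • g₂) xstar hxstar
    rw [← hz] at h
    rw [real_inner_smul_left] at h
    have hexp : V x xstar - V x z - V z xstar
        = ⟪gradient s z, xstar - z⟫ - ⟪gradient s x, xstar - z⟫ := by
      simp only [hV]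
      have h1 : xstar - x = (xstar - z) + (z - x) := by abel
      rw [h1, inner_add_right]
      ring
    have h2 : ⟪g₂, z - xstar⟫ = -⟪g₂, xstar - z⟫ := by
      rw [← inner_neg_right]; congr 1; abel
    rw [h2]
    nlinarith [h]
  -- inequality (B): r = γ • g₁, w = z, P = y
  have hB : γ * ⟪g₁, y - z⟫ + V x y + V y z ≤ V x z := by
    have h := hVI (γ • g₁) z (hz ▸ hPmem x (γ • g₂))
    rw [← hy] at h
    rw [real_inner_smul_left] at h
    have hexp : V x z - V x y - V y z
        = ⟪gradient s y, z - y⟫ - ⟪gradient s x, z - y⟫ := by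
      simp only [hV]
      have h1 : z - x = (z - y) + (y - x) := by abel
      rw [h1, inner_add_right]
      ring
    have h2 : ⟪g₁, y - z⟫ = -⟪g₁, z - y⟫ := by
      rw [← inner_neg_right]; congr 1; abel
    rw [h2]
    nlinarith [h]
  -- Young's inequality term
  have hyoung : γ * ⟪g₂ - g₁, y - z⟫ ≤ 1 / 2 * V x y + V y z := by
    have hcs : ⟪g₂ - g₁, y - z⟫ ≤ ‖g₁ - g₂‖ * ‖y - z‖ := by
      calc ⟪g₂ - g₁, y - z⟫ ≤ ‖g₂ - g₁‖ * ‖y - z‖ := real_inner_le_norm _ _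
        _ = ‖g₁ - g₂‖ * ‖y - z‖ := by rw [norm_sub_rev]
    have hVyz : α / 2 * ‖y - z‖ ^ 2 ≤ V y z := by
      have h := hlb y z
      rw [norm_sub_rev z y] at h
      rw [hV]
      linarith
    have hy2 : γ * (‖g₁ - g₂‖ * ‖y - z‖)
        ≤ 1 / (2 * α) * (γ ^ 2 * ‖g₁ - g₂‖ ^ 2) + α / 2 * ‖y - z‖ ^ 2 := by
      rw [div_mul_eq_mul_div, div_add' _ _ _ (by positivity : (2 * α : ℝ) ≠ 0)]
      rw [le_div_iff₀ (by positivity : (0:ℝ) < 2 * α)]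
      nlinarith [sq_nonneg (γ * ‖g₁ - g₂‖ - α * ‖y - z‖)]
    have hls' : 1 / (2 * α) * (γ ^ 2 * ‖g₁ - g₂‖ ^ 2) ≤ 1 / 2 * V x y := by
      rw [div_mul_eq_mul_div, div_le_iff₀ (by positivity : (0:ℝ) < 2 * α)]
      nlinarith [hls]
    have hg : γ * ⟪g₂ - g₁, y - z⟫ ≤ γ * (‖g₁ - g₂‖ * ‖y - z‖) :=
      mul_le_mul_of_nonneg_left hcs hγ.le
    linarith
  -- combine
  have hsplit : ⟪g₂, y - xstar⟫ = ⟪g₂, z - xstar⟫ + ⟪g₁, y - z⟫ + ⟪g₂ - g₁, y - z⟫ := by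
    have h1 : y - xstar = (z - xstar) + (y - z) := by abel
    rw [h1, inner_add_right, inner_sub_left]
    ring
  have hmain : γ * ⟪g₂, y - xstar⟫ + 1 / 2 * V x y + V z xstar ≤ V x xstar := by
    have hexp : γ * ⟪g₂, y - xstar⟫
        = γ * ⟪g₂, z - xstar⟫ + γ * ⟪g₁, y - z⟫ + γ * ⟪g₂ - g₁, y - z⟫ := by
      rw [hsplit]; ring
    rw [hexp]
    linarith
  refine ⟨hmain, fun hpos => ?_⟩
  have : 0 ≤ γ * ⟪g₂, y - xstar⟫ := mul_nonneg hγ.le hpos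
  linarith
end

section
/- Let X ⊆ ℝⁿ be a nonempty closed convex set and s : ℝⁿ → ℝ be continuously differentiable and α-strongly convex with α > 1, with Bregman distance V and prox-mapping P_X. Then for every x ∈ X, g ∈ ℝⁿ and γ > 0, the prox step x⁺ := P_X(x, γ g) satisfies ‖x⁺ − x‖² ≤ γ²‖g‖²/(α − 1). -/
open RealInnerProductSpace

private lemma grad_apply {n : ℕ} {s : EuclideanSpace ℝ (Fin n) → ℝ}
    (hs : ContDiff ℝ 1 s) (y v : EuclideanSpace ℝ (Fin n)) :
    ⟪gradient s y, v⟫ = fderiv ℝ s y v := by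
  rw [gradient, InnerProductSpace.toDual_symm_apply]

private lemma strong_lower {n : ℕ} {s : EuclideanSpace ℝ (Fin n) → ℝ} {α : ℝ}
    (hs : ContDiff ℝ 1 s)
    (hstrong : ∀ x y : EuclideanSpace ℝ (Fin n),
      α * ‖x - y‖ ^ 2 ≤ ⟪gradient s x - gradient s y, x - y⟫)
    (x z : EuclideanSpace ℝ (Fin n)) :
    α / 2 * ‖z - x‖ ^ 2 ≤ s z - s x - ⟪gradient s x, z - x⟫ := by
  set v : EuclideanSpace ℝ (Fin n) := z - x with hv
  have hsd : Differentiable ℝ s := hs.differentiable one_ne_zero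
  set ψ : ℝ → ℝ := fun t => s (x + t • v) - α / 2 * t ^ 2 * ‖v‖ ^ 2 with hψ
  have hderiv : ∀ t : ℝ,
      HasDerivAt ψ (⟪gradient s (x + t • v), v⟫ - α * t * ‖v‖ ^ 2) t := by
    intro t
    have hL : HasDerivAt (fun t : ℝ => x + t • v) v t := by
      simpa using ((hasDerivAt_id t).smul_const v).const_add x
    have h1 : HasDerivAt (fun t : ℝ => s (x + t • v))
        (fderiv ℝ s (x + t • v) v) t :=
      (hsd (x + t • v)).hasFDerivAt.comp_hasDerivAt t hL
    have h2 : HasDerivAt (fun t : ℝ => α / 2 * t ^ 2 * ‖v‖ ^ 2)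
        (α * t * ‖v‖ ^ 2) t := by
      have := ((hasDerivAt_pow 2 t).const_mul (α / 2)).mul_const (‖v‖ ^ 2)
      exact this.congr_deriv (by ring)
    have := h1.sub h2
    rwa [grad_apply hs]
  have hψdiff : Differentiable ℝ ψ := fun t => (hderiv t).differentiableAt
  have hderiv_eq : ∀ t : ℝ, deriv ψ t = ⟪gradient s (x + t • v), v⟫ - α * t * ‖v‖ ^ 2 :=
    fun t => (hderiv t).deriv
  have hmono : Monotone (deriv ψ) := by
    intro a b hab
    rw [hderiv_eq, hderiv_eq]
    have key := hstrong (x + b • v) (x + a • v)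
    have hd : (x + b • v) - (x + a • v) = (b - a) • v := by
      rw [sub_smul]; abel
    rw [hd] at key
    rw [norm_smul, inner_smul_right, mul_pow] at key
    have hinner : (b - a) * ⟪gradient s (x + b • v) - gradient s (x + a • v), v⟫
        ≥ α * ((b - a) ^ 2 * ‖v‖ ^ 2) := by
      simpa [Real.norm_eq_abs, sq_abs] using key
    rcases eq_or_lt_of_le hab with rfl | hlt
    · exact le_refl _
    · have hba : 0 < b - a := sub_pos.mpr hlt
      have h3 : α * (b - a) * ‖v‖ ^ 2 ≤
          ⟪gradient s (x + b • v) - gradient s (x + a • v), v⟫ := by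
        have := (mul_le_mul_iff_of_pos_left hba).mp (by nlinarith [hinner] :
          (b - a) * (α * (b - a) * ‖v‖ ^ 2) ≤ (b - a) *
            ⟪gradient s (x + b • v) - gradient s (x + a • v), v⟫)
        exact this
      have h4 : ⟪gradient s (x + b • v) - gradient s (x + a • v), v⟫
          = ⟪gradient s (x + b • v), v⟫ - ⟪gradient s (x + a • v), v⟫ :=
        inner_sub_left _ _ _
      nlinarith [h3]
  have hconv : ConvexOn ℝ Set.univ ψ := hmono.convexOn_univ_of_deriv hψdiff
  have hslope := hconv.deriv_le_slope (Set.mem_univ (0 : ℝ)) (Set.mem_univ (1 : ℝ))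
    one_pos (hψdiff 0)
  have hs0 : ψ 0 = s x := by simp [hψ]
  have hs1 : ψ 1 = s z - α / 2 * ‖v‖ ^ 2 := by simp [hψ, hv]
  rw [hderiv_eq, slope_def_field, hs0, hs1] at hslope
  simp only [zero_smul, add_zero, mul_zero, zero_mul, sub_zero, div_one] at hslope
  linarith [hslope]

theorem stmt_11 {n : ℕ} (X : Set (EuclideanSpace ℝ (Fin n)))
    (hXne : X.Nonempty) (hXcl : IsClosed X) (hXconv : Convex ℝ X)
    (s : EuclideanSpace ℝ (Fin n) → ℝ) (α : ℝ) (hα : 1 < α) (hs : ContDiff ℝ 1 s)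
    (hstrong : ∀ x y : EuclideanSpace ℝ (Fin n),
      α * ‖x - y‖ ^ 2 ≤ ⟪gradient s x - gradient s y, x - y⟫)
    (V : EuclideanSpace ℝ (Fin n) → EuclideanSpace ℝ (Fin n) → ℝ)
    (hV : ∀ x z, V x z = s z - s x - ⟪gradient s x, z - x⟫)
    (Pr : EuclideanSpace ℝ (Fin n) → EuclideanSpace ℝ (Fin n) → EuclideanSpace ℝ (Fin n))
    (hPmem : ∀ x r, Pr x r ∈ X)
    (hPmin : ∀ x r, ∀ w ∈ X, ⟪r, Pr x r⟫ + V x (Pr x r) ≤ ⟪r, w⟫ + V x w) :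
    ∀ x ∈ X, ∀ g : EuclideanSpace ℝ (Fin n), ∀ γ : ℝ, 0 < γ →
      ‖Pr x (γ • g) - x‖ ^ 2 ≤ γ ^ 2 * ‖g‖ ^ 2 / (α - 1) := by
  intro x hx g γ hγ
  set p := Pr x (γ • g) with hp
  have hmin := hPmin x (γ • g) x hx
  have hVxx : V x x = 0 := by simp [hV]
  have hVlow : α / 2 * ‖p - x‖ ^ 2 ≤ V x p := by
    rw [hV]; exact strong_lower hs hstrong x p
  have hkey : V x p ≤ ⟪γ • g, x - p⟫ := by
    rw [hVxx] at hmin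
    have : ⟪γ • g, x⟫ - ⟪γ • g, p⟫ = ⟪γ • g, x - p⟫ := (inner_sub_right _ _ _).symm
    linarith [hmin, this.symm.le]
  have hCS : ⟪γ • g, x - p⟫ ≤ γ * (‖g‖ * ‖p - x‖) := by
    rw [real_inner_smul_left]
    have h2 : ⟪g, x - p⟫ ≤ ‖g‖ * ‖x - p‖ := real_inner_le_norm _ _
    rw [norm_sub_rev] at h2
    nlinarith [h2]
  have hd : 0 ≤ ‖p - x‖ := norm_nonneg _
  have hq : α / 2 * ‖p - x‖ ^ 2 ≤ γ * (‖g‖ * ‖p - x‖) := le_trans hVlow (hkey.trans hCS)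
  rw [le_div_iff₀ (by linarith : (0:ℝ) < α - 1)]
  nlinarith [sq_nonneg (γ * ‖g‖ - ‖p - x‖), sq_nonneg (‖p - x‖ * (α - 2)), mul_nonneg (mul_nonneg hγ.le (norm_nonneg g)) hd]
end

section
/- Let X ⊆ ℝⁿ be a nonempty closed convex set, s : ℝⁿ → ℝ continuously differentiable and α-strongly convex (α > 0) with Bregman distance V and prox-mapping P_X, and F : ℝⁿ → ℝⁿ. Then for every x ∈ X, γ > 0 and e ∈ ℝⁿ, setting y := P_X(x, γ(F(x) + e)), the natural residual R_γ(x,F) := ‖x − P_X(x, γ F(x))‖ satisfies R_γ(x,F)² ≤ 2‖x − y‖² + (2γ²/α²)‖e‖². -/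
open RealInnerProductSpace

theorem stmt_17 {n : ℕ} (X : Set (EuclideanSpace ℝ (Fin n)))
    (hXne : X.Nonempty) (hXcl : IsClosed X) (hXconv : Convex ℝ X)
    (s : EuclideanSpace ℝ (Fin n) → ℝ) (α : ℝ) (hα : 0 < α) (hs : ContDiff ℝ 1 s)
    (hstrong : ∀ x y : EuclideanSpace ℝ (Fin n),
      α * ‖x - y‖ ^ 2 ≤ ⟪gradient s x - gradient s y, x - y⟫)
    (V : EuclideanSpace ℝ (Fin n) → EuclideanSpace ℝ (Fin n) → ℝ)
    (hV : ∀ x z, V x z = s z - s x - ⟪gradient s x, z - x⟫)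
    (Pr : EuclideanSpace ℝ (Fin n) → EuclideanSpace ℝ (Fin n) → EuclideanSpace ℝ (Fin n))
    (hPmem : ∀ x r, Pr x r ∈ X)
    (hPmin : ∀ x r, ∀ w ∈ X, ⟪r, Pr x r⟫ + V x (Pr x r) ≤ ⟪r, w⟫ + V x w)
    (F : EuclideanSpace ℝ (Fin n) → EuclideanSpace ℝ (Fin n)) :
    ∀ x ∈ X, ∀ γ : ℝ, 0 < γ → ∀ e : EuclideanSpace ℝ (Fin n),
      ‖x - Pr x (γ • F x)‖ ^ 2
        ≤ 2 * ‖x - Pr x (γ • (F x + e))‖ ^ 2 + 2 * γ ^ 2 / α ^ 2 * ‖e‖ ^ 2 := by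
  intro x hx γ hγ e
  have hdiff : Differentiable ℝ s := hs.differentiable one_ne_zero
  -- Variational inequality at the prox minimizer
  have VI : ∀ r : EuclideanSpace ℝ (Fin n), ∀ w ∈ X,
      0 ≤ ⟪r + gradient s (Pr x r) - gradient s x, w - Pr x r⟫ := by
    intro r w hw
    set u := Pr x r with hu
    set f : EuclideanSpace ℝ (Fin n) → ℝ := fun z => ⟪r, z⟫ + V x z with hf
    have hmin' : IsLocalMinOn f X u :=
      IsMinOn.localize (by intro w hw; exact hPmin x r w hw)
    set L : EuclideanSpace ℝ (Fin n) →L[ℝ] ℝ :=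
      innerSL ℝ (r - gradient s x) + fderiv ℝ s u with hL
    have hfd : HasFDerivAt f L u := by
      have h1 : HasFDerivAt (fun z : EuclideanSpace ℝ (Fin n) => ⟪r - gradient s x, z⟫)
          (innerSL ℝ (r - gradient s x)) u := (innerSL ℝ (r - gradient s x)).hasFDerivAt
      have h2 : HasFDerivAt s (fderiv ℝ s u) u := (hdiff u).hasFDerivAt
      have h3 := h1.add h2
      have heq : f = fun z => (⟪r - gradient s x, z⟫ + s z) + (- s x + ⟪gradient s x, x⟫) := by
        funext z
        simp only [hf, hV, inner_sub_left, inner_sub_right]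
        ring
      rw [heq]
      have h4 := h3.add_const (- s x + ⟪gradient s x, x⟫)
      exact h4
    have hcone : w - u ∈ posTangentConeAt X u :=
      sub_mem_posTangentConeAt_of_segment_subset (hXconv.segment_subset (hPmem x r) hw)
    have hnn := hmin'.hasFDerivWithinAt_nonneg hfd.hasFDerivWithinAt hcone
    have hLapp : L (w - u) = ⟪r + gradient s u - gradient s x, w - u⟫ := by
      have hgrad : (fderiv ℝ s u) (w - u) = ⟪gradient s u, w - u⟫ := by
        rw [gradient]; simp [InnerProductSpace.toDual_apply_apply]
      simp only [hL, ContinuousLinearMap.add_apply, innerSL_apply_apply, hgrad,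
        inner_sub_left, inner_add_left]
      ring
    rwa [hLapp] at hnn
  -- The prox mapping is (1/α)-Lipschitz in r
  have key : ∀ r₁ r₂ : EuclideanSpace ℝ (Fin n),
      α * ‖Pr x r₁ - Pr x r₂‖ ≤ ‖r₁ - r₂‖ := by
    intro r₁ r₂
    set u := Pr x r₁
    set v := Pr x r₂
    have h1 := VI r₁ v (hPmem x r₂)
    have h2 := VI r₂ u (hPmem x r₁)
    have hst := hstrong u v
    have hsum : α * ‖u - v‖ ^ 2 ≤ ⟪r₁ - r₂, v - u⟫ := by
      have e1 : ⟪r₁ + gradient s u - gradient s x, v - u⟫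
          + ⟪r₂ + gradient s v - gradient s x, u - v⟫
          = ⟪r₁ - r₂, v - u⟫ - ⟪gradient s u - gradient s v, u - v⟫ := by
        simp only [inner_add_left, inner_sub_left, inner_sub_right]
        ring
      nlinarith [h1, h2, hst]
    have hcs : ⟪r₁ - r₂, v - u⟫ ≤ ‖r₁ - r₂‖ * ‖u - v‖ := by
      calc ⟪r₁ - r₂, v - u⟫ ≤ ‖r₁ - r₂‖ * ‖v - u‖ := real_inner_le_norm _ _
        _ = ‖r₁ - r₂‖ * ‖u - v‖ := by rw [norm_sub_rev v u]
    rcases eq_or_lt_of_le (norm_nonneg (u - v)) with h0 | h0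
    · rw [← h0]; simpa using norm_nonneg (r₁ - r₂)
    · have : α * ‖u - v‖ * ‖u - v‖ ≤ ‖r₁ - r₂‖ * ‖u - v‖ := by nlinarith
      exact le_of_mul_le_mul_right this h0
  -- Apply to r₁ = γ F x, r₂ = γ (F x + e)
  have hk := key (γ • F x) (γ • (F x + e))
  have hre : ‖γ • F x - γ • (F x + e)‖ = γ * ‖e‖ := by
    have : γ • F x - γ • (F x + e) = -(γ • e) := by
      rw [smul_add]; abel
    rw [this, norm_neg, norm_smul, Real.norm_eq_abs, abs_of_pos hγ]
  rw [hre] at hk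
  set u := Pr x (γ • F x)
  set y := Pr x (γ • (F x + e))
  have huy : ‖u - y‖ ≤ γ * ‖e‖ / α := by
    rw [le_div_iff₀ hα]; linarith [hk]
  have htri : ‖x - u‖ ≤ ‖x - y‖ + ‖u - y‖ := by
    calc ‖x - u‖ = ‖(x - y) + (y - u)‖ := by rw [sub_add_sub_cancel]
      _ ≤ ‖x - y‖ + ‖y - u‖ := norm_add_le _ _
      _ = ‖x - y‖ + ‖u - y‖ := by rw [norm_sub_rev y u]
  have h2 : 2 * γ ^ 2 / α ^ 2 * ‖e‖ ^ 2 = 2 * (γ * ‖e‖ / α) ^ 2 := by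
    field_simp
  rw [h2]
  nlinarith [norm_nonneg (x - u), norm_nonneg (x - y), norm_nonneg (u - y), huy, htri,
    sq_nonneg (‖x - y‖ - ‖u - y‖)]
end

section
/- Let (Ξ, 𝒜, P) be a probability space and f : ℝⁿ × Ξ → ℝⁿ be such that for every x ∈ ℝⁿ the map ξ ↦ f(x,ξ) is Bochner integrable, and define F(x) := ∫_Ξ f(x,ξ) dP(ξ). Let L : Ξ → ℝ be nonnegative with ∫ L² dP < ∞, and suppose that for P-almost every ξ, ‖f(x,ξ) − f(y,ξ)‖ ≤ L(ξ)‖x − y‖ for all x, y ∈ ℝⁿ. Fix x* ∈ ℝⁿ with σ := (∫ ‖f(x*,ξ) − F(x*)‖² dP(ξ))^{1/2} < ∞, and set δ := max{σ, ∫ L dP + (∫ L² dP)^{1/2}}. Then for every x ∈ ℝⁿ, (∫ ‖f(x,ξ) − F(x)‖² dP(ξ))^{1/2} ≤ δ · (1 + ‖x − x*‖). -/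
open MeasureTheory
open scoped ENNReal NNReal

lemma sqrt_int_eq_elp {Ξ : Type*} [MeasurableSpace Ξ] {P : Measure Ξ} {E : Type*}
    [NormedAddCommGroup E] {g : Ξ → E} (hg : MemLp g 2 P) :
    Real.sqrt (∫ ξ, ‖g ξ‖ ^ 2 ∂P) = (eLpNorm g 2 P).toReal := by
  rw [hg.eLpNorm_eq_integral_rpow_norm two_ne_zero ENNReal.ofNat_ne_top,
    ENNReal.toReal_ofReal (by positivity), Real.sqrt_eq_rpow]
  norm_num

theorem stmt_19 {n : ℕ} {Ξ : Type*} [MeasurableSpace Ξ] (P : Measure Ξ)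
    [IsProbabilityMeasure P]
    (f : EuclideanSpace ℝ (Fin n) → Ξ → EuclideanSpace ℝ (Fin n))
    (hf : ∀ x, Integrable (f x) P)
    (F : EuclideanSpace ℝ (Fin n) → EuclideanSpace ℝ (Fin n))
    (hF : ∀ x, F x = ∫ ξ, f x ξ ∂P)
    (L : Ξ → ℝ) (hL0 : ∀ ξ, 0 ≤ L ξ)
    (hL2 : Integrable (fun ξ => L ξ ^ 2) P)
    (hLip : ∀ᵐ ξ ∂P, ∀ x y : EuclideanSpace ℝ (Fin n),
      ‖f x ξ - f y ξ‖ ≤ L ξ * ‖x - y‖)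
    (xstar : EuclideanSpace ℝ (Fin n))
    (hxstar : Integrable (fun ξ => ‖f xstar ξ - F xstar‖ ^ 2) P)
    (σ δ : ℝ)
    (hσ : σ = Real.sqrt (∫ ξ, ‖f xstar ξ - F xstar‖ ^ 2 ∂P))
    (hδ : δ = max σ (∫ ξ, L ξ ∂P + Real.sqrt (∫ ξ, L ξ ^ 2 ∂P))) :
    ∀ x, Real.sqrt (∫ ξ, ‖f x ξ - F x‖ ^ 2 ∂P) ≤ δ * (1 + ‖x - xstar‖) := by
  intro x
  set c : ℝ := ‖x - xstar‖ with hc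
  have hc0 : 0 ≤ c := norm_nonneg _
  -- measurability of L
  have hLmeas : AEStronglyMeasurable L P := by
    have h1 : AEStronglyMeasurable (fun ξ => Real.sqrt (L ξ ^ 2)) P :=
      Real.continuous_sqrt.comp_aestronglyMeasurable hL2.aestronglyMeasurable
    refine h1.congr (Filter.Eventually.of_forall fun ξ => ?_)
    exact Real.sqrt_sq (hL0 ξ)
  have hmL : MemLp L 2 P := by
    refine (memLp_two_iff_integrable_sq hLmeas).mpr hL2
  -- L is integrable
  have hLint : Integrable L P :=
    memLp_one_iff_integrable.mp (hmL.mono_exponent (by norm_num))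
  -- the three pieces
  set g₁ : Ξ → EuclideanSpace ℝ (Fin n) := fun ξ => f x ξ - f xstar ξ with hg₁
  set g₂ : Ξ → EuclideanSpace ℝ (Fin n) := fun ξ => f xstar ξ - F xstar with hg₂
  set g₃ : EuclideanSpace ℝ (Fin n) := F xstar - F x with hg₃
  have hkey : (fun ξ => f x ξ - F x) = fun ξ => g₁ ξ + g₂ ξ + g₃ := by
    funext ξ; simp only [hg₁, hg₂, hg₃]; abel
  have hbound1 : ∀ᵐ ξ ∂P, ‖g₁ ξ‖ ≤ ‖c * L ξ‖ := by
    filter_upwards [hLip] with ξ hξ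
    calc ‖g₁ ξ‖ ≤ L ξ * c := hξ x xstar
      _ ≤ ‖c * L ξ‖ := by
          rw [Real.norm_eq_abs, abs_of_nonneg (mul_nonneg hc0 (hL0 ξ))]; ring_nf; rfl
  have asm1 : AEStronglyMeasurable g₁ P :=
    (hf x).aestronglyMeasurable.sub (hf xstar).aestronglyMeasurable
  have asm2 : AEStronglyMeasurable g₂ P :=
    (hf xstar).aestronglyMeasurable.sub aestronglyMeasurable_const
  have hm1 : MemLp g₁ 2 P :=
    MemLp.of_le (hmL.const_mul c) asm1 hbound1
  have hm2 : MemLp g₂ 2 P := (memLp_two_iff_integrable_sq_norm asm2).mpr hxstar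
  have hm3 : MemLp (fun _ : Ξ => g₃) 2 P := memLp_const g₃
  -- triangle inequality
  have htri : eLpNorm (fun ξ => f x ξ - F x) 2 P ≤
      eLpNorm g₁ 2 P + eLpNorm g₂ 2 P + eLpNorm (fun _ => g₃) 2 P := by
    rw [hkey]
    calc eLpNorm (fun ξ => g₁ ξ + g₂ ξ + g₃) 2 P
        ≤ eLpNorm (fun ξ => g₁ ξ + g₂ ξ) 2 P + eLpNorm (fun _ => g₃) 2 P :=
          eLpNorm_add_le (asm1.add asm2) aestronglyMeasurable_const (by norm_num)
      _ ≤ eLpNorm g₁ 2 P + eLpNorm g₂ 2 P + eLpNorm (fun _ => g₃) 2 P := by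
          gcongr
          exact eLpNorm_add_le asm1 asm2 (by norm_num)
  -- finiteness
  have hf1 : eLpNorm g₁ 2 P ≠ ⊤ := hm1.eLpNorm_ne_top
  have hf2 : eLpNorm g₂ 2 P ≠ ⊤ := hm2.eLpNorm_ne_top
  have hf3 : eLpNorm (fun _ : Ξ => g₃) 2 P ≠ ⊤ := hm3.eLpNorm_ne_top
  have hmm : MemLp (fun ξ => f x ξ - F x) 2 P := by
    rw [hkey]; exact (hm1.add hm2).add hm3
  have hLHS : Real.sqrt (∫ ξ, ‖f x ξ - F x‖ ^ 2 ∂P)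
      = (eLpNorm (fun ξ => f x ξ - F x) 2 P).toReal := sqrt_int_eq_elp hmm
  have htoReal : (eLpNorm (fun ξ => f x ξ - F x) 2 P).toReal ≤
      (eLpNorm g₁ 2 P).toReal + (eLpNorm g₂ 2 P).toReal +
        (eLpNorm (fun _ : Ξ => g₃) 2 P).toReal := by
    rw [← ENNReal.toReal_add hf1 hf2, ← ENNReal.toReal_add (ENNReal.add_ne_top.mpr ⟨hf1, hf2⟩) hf3]
    exact ENNReal.toReal_mono (ENNReal.add_ne_top.mpr ⟨ENNReal.add_ne_top.mpr ⟨hf1, hf2⟩, hf3⟩) htri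
  -- bound each piece
  have hA : (eLpNorm g₁ 2 P).toReal ≤ Real.sqrt (∫ ξ, L ξ ^ 2 ∂P) * c := by
    have h1 : eLpNorm g₁ 2 P ≤ eLpNorm (fun ξ => c * L ξ) 2 P := eLpNorm_mono_ae hbound1
    have h2 : eLpNorm (fun ξ => c * L ξ) 2 P = ‖c‖₊ • eLpNorm L 2 P := by
      have := eLpNorm_const_smul (c : ℝ) L 2 P
      simp only [enorm_eq_nnnorm, ENNReal.smul_def, smul_eq_mul] at this ⊢
      exact this
    have h3 : (eLpNorm (fun ξ => c * L ξ) 2 P).toReal = c * (eLpNorm L 2 P).toReal := by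
      rw [h2]
      simp [ENNReal.toReal_smul, Real.norm_eq_abs, abs_of_nonneg hc0, NNReal.smul_def,
        ENNReal.smul_def]
    have h4 : (eLpNorm L 2 P).toReal = Real.sqrt (∫ ξ, L ξ ^ 2 ∂P) := by
      rw [← sqrt_int_eq_elp hmL]
      simp [Real.norm_eq_abs, sq_abs]
    calc (eLpNorm g₁ 2 P).toReal ≤ (eLpNorm (fun ξ => c * L ξ) 2 P).toReal :=
          ENNReal.toReal_mono (hmL.const_mul c).eLpNorm_ne_top h1
      _ = Real.sqrt (∫ ξ, L ξ ^ 2 ∂P) * c := by rw [h3, h4]; ring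
  have hB : (eLpNorm g₂ 2 P).toReal = σ := by rw [hσ, sqrt_int_eq_elp hm2]
  have hC : (eLpNorm (fun _ : Ξ => g₃) 2 P).toReal ≤ (∫ ξ, L ξ ∂P) * c := by
    have hP : P ≠ 0 := by
      intro h
      have h2 := measure_univ (μ := P)
      simp [h] at h2
    have h1 : eLpNorm (fun _ : Ξ => g₃) 2 P = (‖g₃‖₊ : ℝ≥0∞) := by
      rw [eLpNorm_const g₃ (by norm_num : (2:ℝ≥0∞) ≠ 0) hP]
      simp
      exact enorm_eq_nnnorm _
    rw [h1]
    simp only [ENNReal.coe_toReal, coe_nnnorm]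
    have : ‖g₃‖ ≤ ∫ ξ, L ξ * c ∂P := by
      have heq : g₃ = ∫ ξ, (f xstar ξ - f x ξ) ∂P := by
        rw [hg₃, hF, hF, integral_sub (hf xstar) (hf x)]
      rw [heq]
      refine (norm_integral_le_integral_norm _).trans ?_
      refine integral_mono_ae ((hf xstar).sub (hf x)).norm (hLint.mul_const c) ?_
      filter_upwards [hLip] with ξ hξ
      simpa [hc, norm_sub_rev xstar x] using hξ xstar x
    refine this.trans ?_
    rw [integral_mul_const]
  -- combine
  rw [hLHS]
  have hσ0 : 0 ≤ σ := hσ ▸ Real.sqrt_nonneg _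
  have hδ1 : σ ≤ δ := hδ ▸ le_max_left _ _
  have hδ2 : ∫ ξ, L ξ ∂P + Real.sqrt (∫ ξ, L ξ ^ 2 ∂P) ≤ δ := hδ ▸ le_max_right _ _
  nlinarith [htoReal, hA, hB, hC, hc0, hδ1, hδ2,
    mul_nonneg (sub_nonneg.mpr hδ2) hc0]
end
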